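/- Let Θ ⊂ ℝ^d and suppose the maps α ↦ m_α(x) satisfy the Lipschitz condition |m_{α₁}(x) - m_{α₂}(x)| ≤ φ(x)·‖α₁ - α₂‖ for all α₁, α₂ ∈ Θ and all x, where φ is integrable with respect to a probability measure P. If X_1, X_2, ... are i.i.d. with law P, E|m_α(X_1)| < ∞ for each α, and Θ is compact, then sup_{α∈Θ} |(1/N)Σ_{i=1}^N m_α(X_i) - E[m_α(X_1)]| → 0 almost surely as N → ∞. -/

import Mathlib

/-!
For fixed `ω`, the empirical means `α ↦ N⁻¹ ∑ i < N, m α (X i ω)` are Lipschitz on `Θ` with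
constants `N⁻¹ ∑ i < N, φ (X i ω)`; by the strong law these constants converge almost surely, hence
are bounded, so the empirical means form an equicontinuous family. The strong law also gives, almost
surely, convergence to the Lipschitz limit `α ↦ ∫ m α dP` simultaneously at every point of a
countable dense subset of `Θ`. Equicontinuity spreads this convergence to all of `Θ`, and on the
compact `Θ` pointwise convergence of an equicontinuous family is uniform (Arzelà–Ascoli).
-/

open MeasureTheory ProbabilityTheory Filter Topology

theorem Equicontinuous.tendstoUniformly_of_dense {ι X Y : Type*} [TopologicalSpace X]
    [CompactSpace X] [UniformSpace Y] {l : Filter ι} {F : ι → X → Y} {f : X → Y}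
    (hF : Equicontinuous F) (hf : Continuous f) {D : Set X} (hD : Dense D)
    (hFD : ∀ x ∈ D, Tendsto (F · x) l (𝓝 (f x))) :
    TendstoUniformly F f l := by
  have hpointwise : ∀ x, Tendsto (F · x) l (𝓝 (f x)) := fun x =>
    closure_minimal hFD (hF.isClosed_setOfPred_tendsto hf) (hD x)
  exact UniformFun.tendsto_iff_tendstoUniformly.1
    ((hF.tendsto_uniformFun_iff_pi l f).2 (tendsto_pi_nhds.2 hpointwise))

theorem tendstoUniformly_of_dist_le_mul_of_dense {ι X Y : Type*} [PseudoMetricSpace X]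
    [CompactSpace X] [PseudoMetricSpace Y] {l : Filter ι} {F : ι → X → Y} {f : X → Y}
    {L : ι → ℝ} {C : ℝ} (hL : BddAbove (Set.range L))
    (hF : ∀ i x y, dist (F i x) (F i y) ≤ L i * dist x y)
    (hf : ∀ x y, dist (f x) (f y) ≤ C * dist x y) {D : Set X} (hD : Dense D)
    (hFD : ∀ x ∈ D, Tendsto (F · x) l (𝓝 (f x))) :
    TendstoUniformly F f l := by
  obtain ⟨B, hB⟩ := hL
  have hequi : Equicontinuous F := by
    refine Metric.equicontinuous_of_continuity_modulus (B * ·) ?_ F fun x y i => ?_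
    · simpa using (continuous_const_mul B).tendsto 0
    · exact (hF i x y).trans
        (mul_le_mul_of_nonneg_right (hB ⟨i, rfl⟩) dist_nonneg)
  exact hequi.tendstoUniformly_of_dense (LipschitzWith.of_dist_le' hf).continuous hD hFD

noncomputable def empiricalMean {𝒳 : Type*} (f : 𝒳 → ℝ) (x : ℕ → 𝒳) (N : ℕ) : ℝ :=
  (N : ℝ)⁻¹ * ∑ i ∈ Finset.range N, f (x i)

theorem abs_empiricalMean_sub_empiricalMean_le {𝒳 : Type*} {f g φ : 𝒳 → ℝ} {c : ℝ}
    (h : ∀ y, |f y - g y| ≤ φ y * c) (x : ℕ → 𝒳) (N : ℕ) :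
    |empiricalMean f x N - empiricalMean g x N| ≤ empiricalMean φ x N * c := by
  have hN : (0 : ℝ) ≤ (N : ℝ)⁻¹ := by positivity
  calc |empiricalMean f x N - empiricalMean g x N|
      = (N : ℝ)⁻¹ * |∑ i ∈ Finset.range N, (f (x i) - g (x i))| := by
        rw [empiricalMean, empiricalMean, ← mul_sub, ← Finset.sum_sub_distrib, abs_mul,
          abs_of_nonneg hN]
    _ ≤ (N : ℝ)⁻¹ * ∑ i ∈ Finset.range N, φ (x i) * c := by
        gcongr
        exact (Finset.abs_sum_le_sum_abs _ _).trans (Finset.sum_le_sum fun i _ => h (x i))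
    _ = empiricalMean φ x N * c := by
        rw [empiricalMean, ← Finset.sum_mul, mul_assoc]

theorem abs_integral_sub_integral_le {𝒳 : Type*} [MeasurableSpace 𝒳] {P : Measure 𝒳}
    {f g φ : 𝒳 → ℝ} (hf : Integrable f P) (hg : Integrable g P) (hφ : Integrable φ P) {c : ℝ}
    (h : ∀ y, |f y - g y| ≤ φ y * c) :
    |∫ y, f y ∂P - ∫ y, g y ∂P| ≤ (∫ y, φ y ∂P) * c := by
  rw [← integral_sub hf hg, ← integral_mul_const]
  exact (abs_integral_le_integral_abs).trans
    (integral_mono (hf.sub hg).abs (hφ.mul_const c) h)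

section StrongLaw

variable {𝒳 Ω : Type*} [MeasurableSpace 𝒳] [MeasurableSpace Ω] {P : Measure 𝒳} {Q : Measure Ω}
  {X : ℕ → Ω → 𝒳}

theorem ae_tendsto_empiricalMean_of_measurable (hX : ∀ i, Measurable (X i))
    (hindep : Pairwise fun i j => IndepFun (X i) (X j) Q) (hlaw : ∀ i, Q.map (X i) = P)
    {f : 𝒳 → ℝ} (hf : Measurable f) (hfint : Integrable f P) :
    ∀ᵐ ω ∂Q, Tendsto (empiricalMean f (X · ω)) atTop (𝓝 (∫ x, f x ∂P)) := by
  have hident : ∀ i, IdentDistrib (f ∘ X i) (f ∘ X 0) Q Q := fun i =>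
    (IdentDistrib.mk (hX i).aemeasurable (hX 0).aemeasurable (by rw [hlaw i, hlaw 0])).comp hf
  have hint : Integrable (f ∘ X 0) Q := by
    rw [← hlaw 0] at hfint
    exact hfint.comp_measurable (hX 0)
  have hmean : ∫ ω, (f ∘ X 0) ω ∂Q = ∫ x, f x ∂P := by
    rw [← hlaw 0, integral_map (hX 0).aemeasurable hf.aestronglyMeasurable]; rfl
  filter_upwards [strong_law_ae_real (fun i => f ∘ X i) hint
    (fun i j hij => (hindep hij).comp hf hf) hident] with ω hω
  rw [hmean] at hω
  simp only [div_eq_inv_mul] at hω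
  exact hω

theorem ae_tendsto_empiricalMean (hX : ∀ i, Measurable (X i))
    (hindep : Pairwise fun i j => IndepFun (X i) (X j) Q) (hlaw : ∀ i, Q.map (X i) = P)
    {f : 𝒳 → ℝ} (hf : Integrable f P) :
    ∀ᵐ ω ∂Q, Tendsto (empiricalMean f (X · ω)) atTop (𝓝 (∫ x, f x ∂P)) := by
  set g := hf.aestronglyMeasurable.mk f
  have hfg : f =ᵐ[P] g := hf.aestronglyMeasurable.ae_eq_mk
  have hfgX : ∀ᵐ ω ∂Q, ∀ i, f (X i ω) = g (X i ω) := ae_all_iff.2 fun i =>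
    ae_of_ae_map (hX i).aemeasurable (hlaw i ▸ hfg)
  filter_upwards [hfgX, ae_tendsto_empiricalMean_of_measurable hX hindep hlaw
    hf.aestronglyMeasurable.stronglyMeasurable_mk.measurable (hf.congr hfg)] with ω hωfg hω
  have hmean : empiricalMean f (X · ω) = empiricalMean g (X · ω) :=
    funext fun N => by simp only [empiricalMean, hωfg]
  rwa [hmean, integral_congr_ae hfg]

end StrongLaw

theorem uniform_lln_general {d : ℕ} (Θ : Set (EuclideanSpace ℝ (Fin d))) (hΘ : IsCompact Θ)
    {𝒳 : Type*} [MeasurableSpace 𝒳] (P : Measure 𝒳)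
    (m : EuclideanSpace ℝ (Fin d) → 𝒳 → ℝ)
    (hmint : ∀ α ∈ Θ, Integrable (m α) P)
    (φ : 𝒳 → ℝ) (hφint : Integrable φ P)
    (hLip : ∀ α₁ ∈ Θ, ∀ α₂ ∈ Θ, ∀ x : 𝒳, |m α₁ x - m α₂ x| ≤ φ x * ‖α₁ - α₂‖)
    {Ω : Type*} [MeasurableSpace Ω] (Q : Measure Ω)
    (X : ℕ → Ω → 𝒳)
    (hXmeas : ∀ i, Measurable (X i))
    (hXindep : iIndepFun X Q)
    (hXlaw : ∀ i, Measure.map (X i) Q = P) :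
    ∀ᵐ ω ∂Q, ∀ η : ℝ, 0 < η → ∃ N₀ : ℕ, ∀ N ≥ N₀, ∀ α ∈ Θ,
      |(N : ℝ)⁻¹ * ∑ i ∈ Finset.range N, m α (X i ω) - ∫ x, m α x ∂P| ≤ η := by
  have : CompactSpace Θ := isCompact_iff_compactSpace.1 hΘ
  obtain ⟨D, hDcount, hDdense⟩ := TopologicalSpace.exists_countable_dense Θ
  have hpair : Pairwise fun i j => IndepFun (X i) (X j) Q := fun i j hij => hXindep.indepFun hij
  have hD : ∀ᵐ ω ∂Q, ∀ α ∈ D,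
      Tendsto (empiricalMean (m α) (X · ω)) atTop (𝓝 (∫ x, m α x ∂P)) :=
    (ae_ball_iff hDcount).2 fun α _ => ae_tendsto_empiricalMean hXmeas hpair hXlaw (hmint α α.2)
  filter_upwards [hD, ae_tendsto_empiricalMean hXmeas hpair hXlaw hφint] with ω hωD hωφ
  have hdist : ∀ α β : Θ, dist α β = ‖(α : EuclideanSpace ℝ (Fin d)) - β‖ := fun α β => by
    rw [Subtype.dist_eq, dist_eq_norm]
  have hunif : TendstoUniformly (fun N (α : Θ) => empiricalMean (m α) (X · ω) N)
      (fun α => ∫ x, m α x ∂P) atTop := by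
    refine tendstoUniformly_of_dist_le_mul_of_dense (C := ∫ x, φ x ∂P) hωφ.bddAbove_range
      (fun N α β => ?_) (fun α β => ?_) hDdense hωD
    · rw [Real.dist_eq, hdist]
      exact abs_empiricalMean_sub_empiricalMean_le (hLip α α.2 β β.2) _ N
    · rw [Real.dist_eq, hdist]
      exact abs_integral_sub_integral_le (hmint α α.2) (hmint β β.2) hφint (hLip α α.2 β β.2)
  intro η hη
  obtain ⟨N₀, hN₀⟩ := (Metric.tendstoUniformly_iff.1 hunif η hη).exists_forall_of_atTop
  refine ⟨N₀, fun N hN α hα => ?_⟩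
  rw [← Real.dist_eq, dist_comm]
  exact (hN₀ N hN ⟨α, hα⟩).le

/-- Uniform strong law of large numbers for a Lipschitz-in-parameter class: if `Θ ⊂ ℝ^d`
is compact, `|m α₁ x - m α₂ x| ≤ φ x ‖α₁ - α₂‖` with `φ ∈ L¹(P)`, the `X i` are i.i.d.
with law `P` and `m α` is `P`-integrable for each `α ∈ Θ`, then almost surely
`sup_{α ∈ Θ} |N⁻¹ ∑ m α (X i) - ∫ m α dP| → 0`. -/
theorem uniform_lln {d : ℕ} (Θ : Set (EuclideanSpace ℝ (Fin d))) (hΘ : IsCompact Θ)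
    {𝒳 : Type*} [MeasurableSpace 𝒳] (P : Measure 𝒳) [IsProbabilityMeasure P]
    (m : EuclideanSpace ℝ (Fin d) → 𝒳 → ℝ)
    (hmmeas : ∀ α ∈ Θ, Measurable (m α))
    (hmint : ∀ α ∈ Θ, Integrable (m α) P)
    (φ : 𝒳 → ℝ) (hφint : Integrable φ P)
    (hLip : ∀ α₁ ∈ Θ, ∀ α₂ ∈ Θ, ∀ x : 𝒳, |m α₁ x - m α₂ x| ≤ φ x * ‖α₁ - α₂‖)
    {Ω : Type*} [MeasurableSpace Ω] (Q : Measure Ω) [IsProbabilityMeasure Q]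
    (X : ℕ → Ω → 𝒳)
    (hXmeas : ∀ i, Measurable (X i))
    (hXindep : iIndepFun X Q)
    (hXlaw : ∀ i, Measure.map (X i) Q = P) :
    ∀ᵐ ω ∂Q, ∀ η : ℝ, 0 < η → ∃ N₀ : ℕ, ∀ N ≥ N₀, ∀ α ∈ Θ,
      |(N : ℝ)⁻¹ * ∑ i ∈ Finset.range N, m α (X i ω) - ∫ x, m α x ∂P| ≤ η :=
  uniform_lln_general Θ hΘ P m hmint φ hφint hLip Q X hXmeas hXindep hXlaw
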